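/- arXiv:2308.00900 — 3 statements merged into one kernel-verified Lean document; each statement's English description precedes it below -/
import Mathlib

section
/- Metric balls in the space of continuous maps of a compact space under the graph Fréchet distance are path-connected: let X be a compact topological space, δ > 0, and let φ₀, φ₁, φ₂ : X → ℝⁿ be continuous maps with d_FG(φ₀,φ₁) < δ and d_FG(φ₀,φ₂) < δ. Then there exists a family Γ : [0,1] → (X → ℝⁿ) such that each Γ_t is continuous, Γ_0 = φ₁, Γ_1 = φ₂, t ↦ Γ_t is continuous with respect to d_FG, and d_FG(φ₀, Γ_t) < δ for all t ∈ [0,1]. -/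
open unitInterval

/-- The path Fréchet distance: infimum over orientation-preserving
homeomorphisms of `[0,1]` (i.e. those fixing `0`) of the sup of distances. -/
noncomputable def dFP {E : Type*} [PseudoEMetricSpace E]
    (α β : unitInterval → E) : ENNReal :=
  ⨅ r : {r : unitInterval ≃ₜ unitInterval // r 0 = 0},
    ⨆ t : unitInterval, edist (α t) (β (r.1 t))

/-- The graph Fréchet distance: infimum over all homeomorphisms `h : X ≃ₜ Y`
of the sup of distances; it is `∞` if `X` and `Y` are not homeomorphic. -/
noncomputable def dFG {X Y E : Type*} [TopologicalSpace X] [TopologicalSpace Y]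
    [PseudoEMetricSpace E] (φ : X → E) (ψ : Y → E) : ENNReal :=
  ⨅ h : X ≃ₜ Y, ⨆ x : X, edist (φ x) (ψ (h x))

/-- A path is rectifiable if it has bounded variation (finite length). -/
def Rectifiable {E : Type*} [PseudoEMetricSpace E] (γ : unitInterval → E) : Prop :=
  BoundedVariationOn γ Set.univ

/-- A map is locally injective (an immersion) if every point of the domain has
a neighborhood on which the map is injective. -/
def LocallyInjective {X Y : Type*} [TopologicalSpace X] (f : X → Y) : Prop :=
  ∀ x : X, ∃ U ∈ nhds x, Set.InjOn f U

/-- A map of the circle is rectifiable if `t ↦ φ(e^{2πit})` has bounded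
variation on `[0,1]`. -/
def CircleRectifiable {E : Type*} [PseudoEMetricSpace E] (φ : Circle → E) : Prop :=
  BoundedVariationOn (fun t : ℝ => φ (Circle.exp (2 * Real.pi * t))) (Set.Icc (0:ℝ) 1)

/-!
Choose homeomorphisms `g₁, g₂` of `X` with `sup ‖φ₀ - φᵢ ∘ gᵢ‖ < δ` and move along the segment
from `φ₁` to `φ₂ ∘ g₂ ∘ g₁⁻¹`. Read through `g₁`, each of its points is a convex combination of
`φ₁ ∘ g₁` and `φ₂ ∘ g₂`, so it stays in the ball because Euclidean balls are convex; by
compactness `φ₁` and `φ₂ ∘ g₂ ∘ g₁⁻¹` are at bounded uniform distance, which makes the segment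
Lipschitz for `d_FG`. Finally the endpoint `φ₂ ∘ g₂ ∘ g₁⁻¹` is replaced by `φ₂`, which changes
no graph Fréchet distance since `d_FG` is invariant under reparametrization.
-/

section GraphFrechet

variable {X X' Y Y' E : Type*} [TopologicalSpace X] [TopologicalSpace X'] [TopologicalSpace Y]
  [TopologicalSpace Y'] [PseudoEMetricSpace E]

lemma dFG_le_iSup_edist (φ : X → E) (ψ : Y → E) (h : X ≃ₜ Y) :
    dFG φ ψ ≤ ⨆ x, edist (φ x) (ψ (h x)) :=
  iInf_le _ h

lemma dFG_comp_homeomorph_left_le (φ : X → E) (ψ : Y → E) (h : X' ≃ₜ X) :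
    dFG (φ ∘ h) ψ ≤ dFG φ ψ :=
  le_iInf fun g => (dFG_le_iSup_edist _ ψ (h.trans g)).trans_eq
    (h.toEquiv.iSup_comp (g := fun x => edist (φ x) (ψ (g x))))

lemma dFG_comp_homeomorph_right_le (φ : X → E) (ψ : Y → E) (h : Y' ≃ₜ Y) :
    dFG φ (ψ ∘ h) ≤ dFG φ ψ :=
  le_iInf fun g => (dFG_le_iSup_edist φ _ (g.trans h.symm)).trans_eq (by simp)

lemma dFG_comp_homeomorph_left (φ : X → E) (ψ : Y → E) (h : X' ≃ₜ X) :
    dFG (φ ∘ h) ψ = dFG φ ψ := by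
  refine (dFG_comp_homeomorph_left_le φ ψ h).antisymm ?_
  calc dFG φ ψ = dFG ((φ ∘ h) ∘ h.symm) ψ := by congr 1; ext x; simp
    _ ≤ dFG (φ ∘ h) ψ := dFG_comp_homeomorph_left_le _ ψ h.symm

lemma dFG_comp_homeomorph_right (φ : X → E) (ψ : Y → E) (h : Y' ≃ₜ Y) :
    dFG φ (ψ ∘ h) = dFG φ ψ := by
  refine (dFG_comp_homeomorph_right_le φ ψ h).antisymm ?_
  calc dFG φ ψ = dFG φ ((ψ ∘ h) ∘ h.symm) := by congr 1; ext x; simp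
    _ ≤ dFG φ (ψ ∘ h) := dFG_comp_homeomorph_right_le φ _ h.symm

lemma dFG_le_of_forall_edist_le {φ ψ : X → E} {r : ENNReal} (h : ∀ x, edist (φ x) (ψ x) ≤ r) :
    dFG φ ψ ≤ r :=
  (dFG_le_iSup_edist φ ψ (Homeomorph.refl X)).trans (iSup_le h)

variable {ι : Type*} [DecidableEq ι] {L : ι → X → E} {i : ι} {φ : X → E} {k : X ≃ₜ X}

lemma dFG_update_of_eq_comp_right (hi : L i = φ ∘ k) (ψ : Y → E) (t : ι) :
    dFG ψ (Function.update L i φ t) = dFG ψ (L t) := by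
  by_cases ht : t = i
  · subst ht
    rw [Function.update_self, hi, dFG_comp_homeomorph_right]
  · rw [Function.update_of_ne ht]

lemma dFG_update_of_eq_comp (hi : L i = φ ∘ k) (s t : ι) :
    dFG (Function.update L i φ s) (Function.update L i φ t) = dFG (L s) (L t) := by
  rw [dFG_update_of_eq_comp_right hi]
  by_cases hs : s = i
  · subst hs
    rw [Function.update_self, hi, dFG_comp_homeomorph_left]
  · rw [Function.update_of_ne hs]

end GraphFrechet

section Segment

variable {X E : Type*} [TopologicalSpace X] [NormedAddCommGroup E] [NormedSpace ℝ E]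

open AffineMap

lemma edist_lineMap_le_max (p a b : E) {t : ℝ} (ht : t ∈ Set.Icc 0 1) :
    edist p (lineMap a b t) ≤ max (edist p a) (edist p b) := by
  have hmem := (convex_closedEBall p (max (edist a p) (edist b p))).lineMap_mem
    (Metric.mem_closedEBall.2 (le_max_left _ _)) (Metric.mem_closedEBall.2 (le_max_right _ _)) ht
  simpa only [edist_comm p] using Metric.mem_closedEBall.1 hmem

lemma dFG_lineMap_le_max (φ ψ₁ ψ₂ : X → E) {t : ℝ} (ht : t ∈ Set.Icc 0 1) :
    dFG φ (fun x => lineMap (ψ₁ x) (ψ₂ x) t) ≤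
      max (⨆ x, edist (φ x) (ψ₁ x)) (⨆ x, edist (φ x) (ψ₂ x)) :=
  dFG_le_of_forall_edist_le fun x => (edist_lineMap_le_max _ _ _ ht).trans <|
    max_le_max (le_iSup (fun x => edist (φ x) (ψ₁ x)) x) (le_iSup (fun x => edist (φ x) (ψ₂ x)) x)

lemma exists_dFG_lineMap_lineMap_le [CompactSpace X] {ψ₁ ψ₂ : X → E}
    (hψ₁ : Continuous ψ₁) (hψ₂ : Continuous ψ₂) : ∃ C, 0 ≤ C ∧ ∀ s t : ℝ,
      dFG (fun x => lineMap (ψ₁ x) (ψ₂ x) s) (fun x => lineMap (ψ₁ x) (ψ₂ x) t) ≤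
        ENNReal.ofReal (dist s t * C) := by
  refine ⟨dist (⟨ψ₁, hψ₁⟩ : C(X, E)) ⟨ψ₂, hψ₂⟩, dist_nonneg, fun s t => ?_⟩
  refine dFG_le_of_forall_edist_le fun x => ?_
  rw [edist_dist, dist_lineMap_lineMap]
  exact ENNReal.ofReal_le_ofReal <| mul_le_mul_of_nonneg_left
    (ContinuousMap.dist_apply_le_dist (f := ⟨ψ₁, hψ₁⟩) (g := ⟨ψ₂, hψ₂⟩) x) dist_nonneg

end Segment

lemma exists_pos_forall_dist_lt_imp_lt_ofReal {α : Type*} [PseudoMetricSpace α]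
    {D : α → ENNReal} {t : α} {C : ℝ} (hC : 0 ≤ C)
    (hD : ∀ s, D s ≤ ENNReal.ofReal (dist s t * C)) {ε : ℝ} (hε : 0 < ε) :
    ∃ δ, 0 < δ ∧ ∀ s, dist s t < δ → D s < ENNReal.ofReal ε := by
  refine ⟨ε / (C + 1), by positivity, fun s hs => (hD s).trans_lt ?_⟩
  rw [ENNReal.ofReal_lt_ofReal_iff hε]
  rw [lt_div_iff₀ (by positivity)] at hs
  nlinarith [dist_nonneg (x := s) (y := t)]

theorem dFG_balls_path_connected_general {n : ℕ} {X : Type*}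
    [TopologicalSpace X] [CompactSpace X]
    (δ : ℝ)
    (φ₀ φ₁ φ₂ : X → EuclideanSpace ℝ (Fin n))
    (h₁ : Continuous φ₁) (h₂ : Continuous φ₂)
    (hd₁ : dFG φ₀ φ₁ < ENNReal.ofReal δ) (hd₂ : dFG φ₀ φ₂ < ENNReal.ofReal δ) :
    ∃ Γ : unitInterval → X → EuclideanSpace ℝ (Fin n),
      (∀ t, Continuous (Γ t)) ∧
      Γ 0 = φ₁ ∧ Γ 1 = φ₂ ∧
      (∀ t : unitInterval, ∀ ε : ℝ, 0 < ε → ∃ δ' : ℝ, 0 < δ' ∧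
        ∀ s : unitInterval, |(s : ℝ) - (t : ℝ)| < δ' →
          dFG (Γ s) (Γ t) < ENNReal.ofReal ε) ∧
      (∀ t : unitInterval, dFG φ₀ (Γ t) < ENNReal.ofReal δ) := by
  obtain ⟨g₁, hg₁⟩ := iInf_lt_iff.1 hd₁
  obtain ⟨g₂, hg₂⟩ := iInf_lt_iff.1 hd₂
  set g := g₁.symm.trans g₂
  let L : I → X → EuclideanSpace ℝ (Fin n) := fun t x =>
    AffineMap.lineMap (φ₁ x) (φ₂ (g x)) (t : ℝ)
  have hL₁ : L 1 = φ₂ ∘ g := by ext x; simp [L]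
  have hLg₁ : ∀ t, L t ∘ g₁ = fun x => AffineMap.lineMap (φ₁ (g₁ x)) (φ₂ (g₂ x)) (t : ℝ) := by
    intro t; ext x; simp [L, g]
  have hcont : Continuous (φ₂ ∘ g) := h₂.comp g.continuous
  obtain ⟨C, hC, hLC⟩ := exists_dFG_lineMap_lineMap_le h₁ hcont
  refine ⟨Function.update L 1 φ₂, fun t => ?_, by simp [L], by simp, fun t ε hε => ?_, fun t => ?_⟩
  · by_cases ht : t = 1
    · simpa [ht] using h₂
    · simpa [ht, L] using h₁.lineMap hcont continuous_const
  · simp only [← Real.dist_eq, ← Subtype.dist_eq, dFG_update_of_eq_comp hL₁]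
    exact exists_pos_forall_dist_lt_imp_lt_ofReal hC (fun s : I => hLC s t) hε
  · rw [dFG_update_of_eq_comp_right hL₁, ← dFG_comp_homeomorph_right _ _ g₁, hLg₁]
    exact (dFG_lineMap_le_max _ _ _ t.2).trans_lt (max_lt hg₁ hg₂)

/-- Metric balls in the space of continuous maps of a compact space under the
graph Fréchet distance are path-connected. -/
theorem dFG_balls_path_connected {n : ℕ} {X : Type*}
    [TopologicalSpace X] [CompactSpace X]
    (δ : ℝ) (hδ : 0 < δ)
    (φ₀ φ₁ φ₂ : X → EuclideanSpace ℝ (Fin n))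
    (h₀ : Continuous φ₀) (h₁ : Continuous φ₁) (h₂ : Continuous φ₂)
    (hd₁ : dFG φ₀ φ₁ < ENNReal.ofReal δ) (hd₂ : dFG φ₀ φ₂ < ENNReal.ofReal δ) :
    ∃ Γ : unitInterval → X → EuclideanSpace ℝ (Fin n),
      (∀ t, Continuous (Γ t)) ∧
      Γ 0 = φ₁ ∧ Γ 1 = φ₂ ∧
      (∀ t : unitInterval, ∀ ε : ℝ, 0 < ε → ∃ δ' : ℝ, 0 < δ' ∧
        ∀ s : unitInterval, |(s : ℝ) - (t : ℝ)| < δ' →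
          dFG (Γ s) (Γ t) < ENNReal.ofReal ε) ∧
      (∀ t : unitInterval, dFG φ₀ (Γ t) < ENNReal.ofReal δ) :=
  dFG_balls_path_connected_general δ φ₀ φ₁ φ₂ h₁ h₂ hd₁ hd₂
end

section
/- Metric balls in the space of continuous rectifiable paths under the path Fréchet distance are path-connected: let δ > 0 and let α, β₁, β₂ : [0,1] → ℝⁿ be continuous rectifiable paths with d_FP(α,β₁) < δ and d_FP(α,β₂) < δ. Then there exists a family Γ : [0,1] → ([0,1] → ℝⁿ) such that each Γ_t is continuous and rectifiable, Γ_0 = β₁, Γ_1 = β₂, t ↦ Γ_t is continuous with respect to d_FP, and d_FP(α, Γ_t) < δ for all t ∈ [0,1]. -/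
open unitInterval

/-!
Pick reparametrizations `e₁, e₂` with `sup_u ‖α u - βᵢ (eᵢ u)‖ < δ`. In the parameter of `α`, the
straight-line homotopy `(1 - t) • β₁ ∘ e₁ + t • β₂ ∘ e₂` stays within `δ` of `α` because balls are
convex. Precomposing it with the increasing homeomorphism `(1 - t) e₁⁻¹ + t e₂⁻¹` does not change
its distance to `α`, and makes it equal to `β₁` at `t = 0` and to `β₂` at `t = 1`. The resulting
family is jointly continuous, hence continuous in `t` for the uniform distance on the compact
square, and a fortiori for `dFP`.
-/

open Set Function

theorem BoundedVariationOn.add {α E : Type*} [LinearOrder α] [SeminormedAddCommGroup E]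
    {f g : α → E} {s : Set α} (hf : BoundedVariationOn f s) (hg : BoundedVariationOn g s) :
    BoundedVariationOn (f + g) s := by
  refine ne_top_of_le_ne_top (ENNReal.add_ne_top.2 ⟨hf, hg⟩) (iSup_le ?_)
  rintro ⟨n, u, hu, us⟩
  calc ∑ i ∈ Finset.range n, edist ((f + g) (u (i + 1))) ((f + g) (u i))
      ≤ ∑ i ∈ Finset.range n, (edist (f (u (i + 1))) (f (u i)) + edist (g (u (i + 1))) (g (u i))) :=
        Finset.sum_le_sum fun i _ => edist_add_add_le _ _ _ _
    _ ≤ eVariationOn f s + eVariationOn g s := by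
        rw [Finset.sum_add_distrib]
        exact add_le_add (eVariationOn.sum_le hu us) (eVariationOn.sum_le hu us)

theorem Rectifiable.comp_monotone {E : Type*} [PseudoEMetricSpace E] {γ : I → E}
    (hγ : Rectifiable γ) {φ : I → I} (hφ : Monotone φ) : Rectifiable (γ ∘ φ) :=
  ne_top_of_le_ne_top hγ
    (eVariationOn.comp_le_of_monotoneOn γ φ (hφ.monotoneOn univ) (mapsTo_univ _ _))

theorem Rectifiable.const_smul {E : Type*} [SeminormedAddCommGroup E] [NormedSpace ℝ E]
    {γ : I → E} (hγ : Rectifiable γ) (c : ℝ) : Rectifiable (c • γ) :=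
  (lipschitzWith_smul c).comp_boundedVariationOn hγ

theorem edist_smul_add_smul_le_max {E : Type*} [SeminormedAddCommGroup E] [NormedSpace ℝ E]
    (a x y : E) {t : ℝ} (h₀ : 0 ≤ t) (h₁ : t ≤ 1) :
    edist a ((1 - t) • x + t • y) ≤ max (edist a x) (edist a y) := by
  simp only [edist_dist, dist_comm a, ← ENNReal.ofReal_max]
  exact ENNReal.ofReal_le_ofReal <|
    (convexOn_univ_dist a).le_on_segment' (mem_univ x) (mem_univ y) (by linarith) h₀ (by ring)

namespace unitInterval

theorem strictMono_of_homeomorph_map_zero {r : I ≃ₜ I} (hr : r 0 = 0) : StrictMono r :=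
  r.continuous.strictMono_of_inj_boundedOrder (hr.le.trans nonneg') r.injective

theorem convexComb_lt_convexComb {a b : ℝ} {x x' y y' : Icc a b} (hx : x < x') (hy : y < y')
    (t : I) :
    Icc.convexComb x y t < Icc.convexComb x' y' t := by
  rw [← Subtype.coe_lt_coe] at hx hy ⊢
  simp only [Icc.coe_convexComb]
  rcases t.2.1.eq_or_lt with ht | ht
  · simp [← ht, hx]
  · nlinarith [t.2.2]

theorem continuous_convexComb_apply {X : Type*} [TopologicalSpace X] {f g : X → I}
    (hf : Continuous f) (hg : Continuous g) :
    Continuous fun p : I × X => Icc.convexComb (f p.2) (g p.2) p.1 :=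
  Icc.continuous_convexComb_prod.comp
    ((hf.comp continuous_snd).prodMk ((hg.comp continuous_snd).prodMk continuous_fst))

noncomputable def convexCombOrderIso (e₁ e₂ : I ≃o I) (t : I) : I ≃o I :=
  StrictMono.orderIsoOfSurjective (fun s => Icc.convexComb (e₁ s) (e₂ s) t)
    (fun _ _ h => convexComb_lt_convexComb (e₁.strictMono h) (e₂.strictMono h) t)
    (fun c => intermediate_value_univ (f := fun s => Icc.convexComb (e₁ s) (e₂ s) t) ⊥ ⊤
      ((continuous_convexComb_apply e₁.continuous e₂.continuous).comp
        (continuous_const.prodMk continuous_id)) (by simp))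

@[simp]
theorem convexCombOrderIso_apply (e₁ e₂ : I ≃o I) (t s : I) :
    convexCombOrderIso e₁ e₂ t s = Icc.convexComb (e₁ s) (e₂ s) t :=
  rfl

end unitInterval

theorem dFP_le_of_orderIso {E : Type*} [PseudoEMetricSpace E] (α β : I → E) (e : I ≃o I) :
    dFP α β ≤ ⨆ t, edist (α t) (β (e t)) :=
  iInf_le (fun r : {r : I ≃ₜ I // r 0 = 0} => ⨆ t, edist (α t) (β (r.1 t)))
    ⟨e.toHomeomorph, e.map_bot⟩

theorem exists_orderIso_of_dFP_lt {E : Type*} [PseudoEMetricSpace E] {α β : I → E} {c : ENNReal}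
    (h : dFP α β < c) : ∃ e : I ≃o I, ⨆ t, edist (α t) (β (e t)) < c := by
  obtain ⟨r, hr⟩ := iInf_lt_iff.1 h
  exact ⟨(strictMono_of_homeomorph_map_zero r.2).orderIsoOfSurjective r.1 r.1.surjective, hr⟩

theorem exists_dFP_lt_of_continuous_uncurry {E : Type*} [PseudoMetricSpace E] {Γ : I → I → E}
    (hΓ : Continuous (uncurry Γ)) (t : I) {ε : ℝ} (hε : 0 < ε) :
    ∃ δ : ℝ, 0 < δ ∧ ∀ s : I, |(s : ℝ) - t| < δ → dFP (Γ s) (Γ t) < ENNReal.ofReal ε := by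
  let F : C(I, C(I, E)) := ContinuousMap.curry ⟨uncurry Γ, hΓ⟩
  obtain ⟨δ, hδ, hF⟩ := Metric.continuous_iff.1 F.continuous t ε hε
  refine ⟨δ, hδ, fun s hs => (dFP_le_of_orderIso _ _ (OrderIso.refl I)).trans_lt ?_⟩
  have hFst : dist (F s) (F t) < ε := hF s (by rwa [Subtype.dist_eq, Real.dist_eq])
  refine lt_of_le_of_lt (iSup_le fun u => ?_) ((ENNReal.ofReal_lt_ofReal_iff hε).2 hFst)
  rw [edist_dist]
  exact ENNReal.ofReal_le_ofReal (ContinuousMap.dist_apply_le_dist (f := F s) (g := F t) u)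

section FrechetHomotopy

variable {E : Type*} [SeminormedAddCommGroup E] [NormedSpace ℝ E]
  (β₁ β₂ : I → E) (e₁ e₂ : I ≃o I)

def reparamHomotopy (t : I) : I → E :=
  (1 - (t : ℝ)) • (β₁ ∘ e₁) + (t : ℝ) • (β₂ ∘ e₂)

noncomputable def frechetHomotopy (t : I) : I → E :=
  reparamHomotopy β₁ β₂ e₁ e₂ t ∘ convexCombOrderIso e₁.symm e₂.symm t

theorem frechetHomotopy_zero : frechetHomotopy β₁ β₂ e₁ e₂ 0 = β₁ := by
  funext s
  simp [frechetHomotopy, reparamHomotopy]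

theorem frechetHomotopy_one : frechetHomotopy β₁ β₂ e₁ e₂ 1 = β₂ := by
  funext s
  simp [frechetHomotopy, reparamHomotopy]

theorem frechetHomotopy_comp_symm (t : I) :
    frechetHomotopy β₁ β₂ e₁ e₂ t ∘ (convexCombOrderIso e₁.symm e₂.symm t).symm =
      reparamHomotopy β₁ β₂ e₁ e₂ t := by
  funext s
  simp [frechetHomotopy]

variable {β₁ β₂}

theorem continuous_uncurry_frechetHomotopy (h₁ : Continuous β₁) (h₂ : Continuous β₂) :
    Continuous (uncurry (frechetHomotopy β₁ β₂ e₁ e₂)) := by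
  have hφ := continuous_convexComb_apply e₁.symm.continuous e₂.symm.continuous
  have he₁ := h₁.comp (e₁.continuous.comp hφ)
  have he₂ := h₂.comp (e₂.continuous.comp hφ)
  change Continuous fun p : I × I =>
    (1 - (p.1 : ℝ)) • β₁ (e₁ (Icc.convexComb (e₁.symm p.2) (e₂.symm p.2) p.1)) +
      (p.1 : ℝ) • β₂ (e₂ (Icc.convexComb (e₁.symm p.2) (e₂.symm p.2) p.1))
  exact ((continuous_const.sub (continuous_subtype_val.comp continuous_fst)).smul he₁).add
    ((continuous_subtype_val.comp continuous_fst).smul he₂)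

theorem rectifiable_frechetHomotopy (h₁ : Rectifiable β₁) (h₂ : Rectifiable β₂) (t : I) :
    Rectifiable (frechetHomotopy β₁ β₂ e₁ e₂ t) :=
  Rectifiable.comp_monotone
    (BoundedVariationOn.add ((h₁.comp_monotone e₁.monotone).const_smul _)
      ((h₂.comp_monotone e₂.monotone).const_smul _))
    (convexCombOrderIso _ _ t).monotone

theorem dFP_frechetHomotopy_le (α : I → E) (t : I) :
    dFP α (frechetHomotopy β₁ β₂ e₁ e₂ t) ≤
      max (⨆ u, edist (α u) (β₁ (e₁ u))) (⨆ u, edist (α u) (β₂ (e₂ u))) := by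
  refine (dFP_le_of_orderIso _ _ (convexCombOrderIso e₁.symm e₂.symm t).symm).trans
    (iSup_le fun u => ?_)
  have hu := congrFun (frechetHomotopy_comp_symm β₁ β₂ e₁ e₂ t) u
  simp only [comp_apply] at hu
  rw [hu]
  exact (edist_smul_add_smul_le_max _ _ _ t.2.1 t.2.2).trans
    (max_le_max (le_iSup (fun v => edist (α v) (β₁ (e₁ v))) u)
      (le_iSup (fun v => edist (α v) (β₂ (e₂ v))) u))

end FrechetHomotopy

theorem dFP_balls_path_connected_general {n : ℕ} (δ : ℝ)
    (α β₁ β₂ : unitInterval → EuclideanSpace ℝ (Fin n))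
    (hβ₁c : Continuous β₁) (hβ₁r : Rectifiable β₁)
    (hβ₂c : Continuous β₂) (hβ₂r : Rectifiable β₂)
    (hd₁ : dFP α β₁ < ENNReal.ofReal δ) (hd₂ : dFP α β₂ < ENNReal.ofReal δ) :
    ∃ Γ : unitInterval → unitInterval → EuclideanSpace ℝ (Fin n),
      (∀ t, Continuous (Γ t) ∧ Rectifiable (Γ t)) ∧
      Γ 0 = β₁ ∧ Γ 1 = β₂ ∧
      (∀ t : unitInterval, ∀ ε : ℝ, 0 < ε → ∃ δ' : ℝ, 0 < δ' ∧
        ∀ s : unitInterval, |(s : ℝ) - (t : ℝ)| < δ' →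
          dFP (Γ s) (Γ t) < ENNReal.ofReal ε) ∧
      (∀ t : unitInterval, dFP α (Γ t) < ENNReal.ofReal δ) := by
  obtain ⟨e₁, he₁⟩ := exists_orderIso_of_dFP_lt hd₁
  obtain ⟨e₂, he₂⟩ := exists_orderIso_of_dFP_lt hd₂
  have hΓ := continuous_uncurry_frechetHomotopy e₁ e₂ hβ₁c hβ₂c
  exact ⟨frechetHomotopy β₁ β₂ e₁ e₂,
    fun t => ⟨hΓ.uncurry_left t, rectifiable_frechetHomotopy e₁ e₂ hβ₁r hβ₂r t⟩,
    frechetHomotopy_zero β₁ β₂ e₁ e₂, frechetHomotopy_one β₁ β₂ e₁ e₂,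
    fun t _ hε => exists_dFP_lt_of_continuous_uncurry hΓ t hε,
    fun t => (dFP_frechetHomotopy_le e₁ e₂ α t).trans_lt (max_lt he₁ he₂)⟩

/-- Metric balls in the space of continuous rectifiable paths under the path
Fréchet distance are path-connected. -/
theorem dFP_balls_path_connected {n : ℕ} (δ : ℝ) (hδ : 0 < δ)
    (α β₁ β₂ : unitInterval → EuclideanSpace ℝ (Fin n))
    (hαc : Continuous α) (hαr : Rectifiable α)
    (hβ₁c : Continuous β₁) (hβ₁r : Rectifiable β₁)
    (hβ₂c : Continuous β₂) (hβ₂r : Rectifiable β₂)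
    (hd₁ : dFP α β₁ < ENNReal.ofReal δ) (hd₂ : dFP α β₂ < ENNReal.ofReal δ) :
    ∃ Γ : unitInterval → unitInterval → EuclideanSpace ℝ (Fin n),
      (∀ t, Continuous (Γ t) ∧ Rectifiable (Γ t)) ∧
      Γ 0 = β₁ ∧ Γ 1 = β₂ ∧
      (∀ t : unitInterval, ∀ ε : ℝ, 0 < ε → ∃ δ' : ℝ, 0 < δ' ∧
        ∀ s : unitInterval, |(s : ℝ) - (t : ℝ)| < δ' →
          dFP (Γ s) (Γ t) < ENNReal.ofReal ε) ∧
      (∀ t : unitInterval, dFP α (Γ t) < ENNReal.ofReal δ) :=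
  dFP_balls_path_connected_general δ α β₁ β₂ hβ₁c hβ₁r hβ₂c hβ₂r hd₁ hd₂
end

section
/- For n = 1, the space of immersed paths in ℝ under the path Fréchet distance is not path-connected: for α, β : [0,1] → ℝ given by α(t) = t and β(t) = 1 − t (both continuous, rectifiable, and locally injective), there is no family Γ : [0,1] → ([0,1] → ℝ) such that each Γ_t is continuous and locally injective, d_FP(Γ_0, α) = 0, d_FP(Γ_1, β) = 0, and t ↦ Γ_t is continuous with respect to d_FP. -/
open unitInterval

/-! A continuous locally injective path in `ℝ` has distinct endpoints (otherwise it has an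
interior extremum, where it cannot be injective), and `d_FP` controls the distance of the
endpoints because a homeomorphism of `[0,1]` fixing `0` also fixes `1`. So along a
`d_FP`-continuous family from `α` to `β`, the continuous function `t ↦ Γ t 1 - Γ t 0` would
go from `1` to `-1` without ever vanishing. -/

open Set

section Order

variable {X Y : Type*} [ConditionallyCompleteLinearOrder X] [DenselyOrdered X]
  [TopologicalSpace X] [OrderTopology X] [LinearOrder Y] [TopologicalSpace Y] [OrderTopology Y]

theorem not_isExtrOn_of_injOn_Icc {f : X → Y} {a b c : X} (hac : a < c) (hcb : c < b)
    (hf : ContinuousOn f (Icc a b)) (hinj : InjOn f (Icc a b)) : ¬ IsExtrOn f (Icc a b) c := by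
  have hab : a ≤ b := (hac.trans hcb).le
  have ha : a ∈ Icc a b := left_mem_Icc.2 hab
  have hb : b ∈ Icc a b := right_mem_Icc.2 hab
  have hc : c ∈ Icc a b := ⟨hac.le, hcb.le⟩
  rcases hf.strictMonoOn_of_injOn_Icc' hab hinj with hmono | hanti
  · rintro (hmin | hmax)
    · exact (hmono ha hc hac).not_ge (hmin ha)
    · exact (hmono hc hb hcb).not_ge (hmax hb)
  · rintro (hmin | hmax)
    · exact (hanti hc hb hcb).not_ge (hmin hb)
    · exact (hanti ha hc hac).not_ge (hmax ha)

theorem LocallyInjective.apply_ne_apply {f : X → Y} (hf : Continuous f)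
    (hinj : LocallyInjective f) {a b : X} (hab : a < b) : f a ≠ f b := by
  intro hfab
  obtain ⟨c, ⟨hac, hcb⟩, hextr⟩ := exists_Ioo_extr_on_Icc hab hf.continuousOn hfab
  obtain ⟨U, hU, hinjU⟩ := hinj c
  have hU' : U ∩ Ioo a b ∈ nhds c := Filter.inter_mem hU (Ioo_mem_nhds hac hcb)
  obtain ⟨l, u, ⟨hlc, hcu⟩, hlu⟩ := (mem_nhds_iff_exists_Ioo_subset' ⟨a, hac⟩ ⟨b, hcb⟩).1 hU'
  obtain ⟨l', hll', hl'c⟩ := exists_between hlc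
  obtain ⟨u', hcu', hu'u⟩ := exists_between hcu
  have hsub : Icc l' u' ⊆ U ∩ Ioo a b := (Icc_subset_Ioo hll' hu'u).trans hlu
  exact not_isExtrOn_of_injOn_Icc hl'c hcu' hf.continuousOn (hinjU.mono fun x hx => (hsub hx).1)
    (hextr.on_subset fun x hx => Ioo_subset_Icc_self (hsub hx).2)

end Order

theorem Homeomorph.apply_top_of_apply_bot {X : Type*} [CompleteLinearOrder X] [Nontrivial X]
    [DenselyOrdered X] [TopologicalSpace X] [OrderTopology X] {r : X ≃ₜ X} (hr : r ⊥ = ⊥) :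
    r ⊤ = ⊤ := by
  rcases r.continuous.strictMono_of_inj r.injective with hmono | hanti
  · obtain ⟨x, hx⟩ := r.surjective ⊤
    exact top_le_iff.1 (hx.symm.trans_le (hmono.monotone le_top))
  · exact absurd (hanti (bot_lt_top (α := X))) (by simp [hr])

section dFP

variable {E : Type*}

theorem edist_apply_zero_le_dFP [PseudoEMetricSpace E] (α β : I → E) :
    edist (α 0) (β 0) ≤ dFP α β :=
  le_iInf fun r => le_iSup_of_le 0 (by rw [r.2])

theorem edist_apply_one_le_dFP [PseudoEMetricSpace E] (α β : I → E) :
    edist (α 1) (β 1) ≤ dFP α β :=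
  le_iInf fun r =>
    le_iSup_of_le 1 (by rw [show r.1 1 = 1 from Homeomorph.apply_top_of_apply_bot r.2])

theorem endpoints_eq_of_dFP_eq_zero [EMetricSpace E] {α β : I → E} (h : dFP α β = 0) :
    α 0 = β 0 ∧ α 1 = β 1 :=
  ⟨edist_le_zero.1 (h ▸ edist_apply_zero_le_dFP α β),
    edist_le_zero.1 (h ▸ edist_apply_one_le_dFP α β)⟩

theorem continuous_of_edist_le_dFP [PseudoMetricSpace E] {Γ : I → I → E}
    (hΓ : ∀ t : I, ∀ ε : ℝ, 0 < ε → ∃ δ : ℝ, 0 < δ ∧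
      ∀ s : I, |(s : ℝ) - (t : ℝ)| < δ → dFP (Γ s) (Γ t) < ENNReal.ofReal ε)
    {g : I → E} (hg : ∀ s t, edist (g s) (g t) ≤ dFP (Γ s) (Γ t)) : Continuous g := by
  refine Metric.continuous_iff.2 fun t ε hε => ?_
  obtain ⟨δ, hδ, hst⟩ := hΓ t ε hε
  refine ⟨δ, hδ, fun s hs => edist_lt_ofReal.1 ((hg s t).trans_lt (hst s ?_))⟩
  rwa [Subtype.dist_eq, Real.dist_eq] at hs

end dFP

/-- For n = 1, the space of immersed paths in ℝ under the path Fréchet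
distance is not path-connected: there is no continuous family of locally
injective paths from α(t) = t to β(t) = 1 - t. -/
theorem immersed_paths_not_path_connected_dim_one :
    ¬ ∃ Γ : unitInterval → unitInterval → ℝ,
      (∀ t, Continuous (Γ t) ∧ LocallyInjective (Γ t)) ∧
      dFP (Γ 0) (fun t : unitInterval => (t : ℝ)) = 0 ∧
      dFP (Γ 1) (fun t : unitInterval => 1 - (t : ℝ)) = 0 ∧
      (∀ t : unitInterval, ∀ ε : ℝ, 0 < ε → ∃ δ : ℝ, 0 < δ ∧
        ∀ s : unitInterval, |(s : ℝ) - (t : ℝ)| < δ →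
          dFP (Γ s) (Γ t) < ENNReal.ofReal ε) := by
  rintro ⟨Γ, hΓ, h0, h1, hcont⟩
  obtain ⟨hΓ00, hΓ01⟩ := endpoints_eq_of_dFP_eq_zero h0
  obtain ⟨hΓ10, hΓ11⟩ := endpoints_eq_of_dFP_eq_zero h1
  have hf : Continuous fun t => Γ t 1 - Γ t 0 :=
    (continuous_of_edist_le_dFP hcont fun s t => edist_apply_one_le_dFP (Γ s) (Γ t)).sub
      (continuous_of_edist_le_dFP hcont fun s t => edist_apply_zero_le_dFP (Γ s) (Γ t))
  have hsign : (0 : ℝ) ∈ Icc (Γ 1 1 - Γ 1 0) (Γ 0 1 - Γ 0 0) := by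
    simp [hΓ00, hΓ01, hΓ10, hΓ11]
  obtain ⟨t, ht⟩ := intermediate_value_univ 1 0 hf hsign
  exact (hΓ t).2.apply_ne_apply (hΓ t).1 zero_lt_one (sub_eq_zero.1 ht).symm
end
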